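/- Let (μ_n)_{n≥1} be probability measures on [0,1] converging weakly to a probability measure μ that is absolutely continuous with respect to Lebesgue measure. Let (a_m)_{m≥1} ⊆ [0,1] with a_m → a, and let g_{m,n} : [0,1]² → [0,1] be functions satisfying a_m ≤ g_{m,n}(u,v) for all u, v, m, n and converging, uniformly in (u,v), to a continuous function g : [0,1]² → [0,1] as m, n → ∞ (i.e., for every ε > 0 there is N such that |g_{m,n}(u,v) − g(u,v)| < ε for all m, n ≥ N and all (u,v)). Then μ_n([a_m, g_{m,n}(u,v)]) converges to μ([a, g(u,v)]) uniformly in (u,v) ∈ [0,1]² as m, n → ∞: for every ε > 0 there exists N such that for all m, n ≥ N and all (u,v) ∈ [0,1]², |μ_n([a_m, g_{m,n}(u,v)]) − μ([a, g(u,v)])| < ε. -/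

import Mathlib

/-!
Since `μ ≪ volume`, the CDF `F` of `μ` is continuous. By the portmanteau theorem both
`x ↦ μₙ(-∞, x]` and `x ↦ μₙ(-∞, x)` then converge pointwise to `F`; being monotone with a
continuous limit, they converge uniformly on `[0, 1]` (Pólya). Writing
`μₙ[s, t] = μₙ(-∞, t] - μₙ(-∞, s)` and `μ[a, t] = F t - F a`, the claim follows from
these two uniform convergences and the uniform continuity of `F` on `[0, 1]`.
-/

open Set Filter MeasureTheory ProbabilityTheory Topology

lemma exists_finset_bracket_Icc (a b : ℝ) {δ : ℝ} (hδ : 0 < δ) :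
    ∃ S : Finset ℝ, ↑S ⊆ Icc a b ∧
      ∀ t ∈ Icc a b, ∃ s ∈ S, ∃ s' ∈ S, s ≤ t ∧ t ≤ s' ∧ s' - s ≤ δ := by
  obtain hba | hab := lt_or_ge b a
  · exact ⟨∅, by simp, fun t ht => absurd (ht.1.trans ht.2) hba.not_ge⟩
  let x : ℕ → ℝ := fun i => min b (a + i * δ)
  have hx : ∀ i, x i ∈ Icc a b := fun i =>
    ⟨le_min hab (le_add_of_nonneg_right (by positivity)), min_le_left _ _⟩
  let K := ⌊(b - a) / δ⌋₊ + 2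
  refine ⟨(Finset.range K).image x,
    by simpa [Set.subset_def] using fun i _ => hx i, fun t ht => ?_⟩
  set i := ⌊(t - a) / δ⌋₊
  have hi : i * δ ≤ t - a :=
    (le_div_iff₀ hδ).1 (Nat.floor_le (div_nonneg (sub_nonneg.2 ht.1) hδ.le))
  have hi' : t - a < (i + 1) * δ := (div_lt_iff₀ hδ).1 (Nat.lt_floor_add_one _)
  have hiK : i + 1 < K := Nat.add_lt_add_left one_lt_two _ |>.trans_le'
    (Nat.add_le_add_right (Nat.floor_le_floor (by gcongr; exact ht.2)) _)
  have hxi : x i = a + i * δ := min_eq_right (by linarith [ht.2])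
  have hxi' : x (i + 1) ≤ a + (i + 1) * δ := by push_cast [x]; exact min_le_right _ _
  refine ⟨x i, Finset.mem_image_of_mem _ (Finset.mem_range.2 (by omega)), x (i + 1),
    Finset.mem_image_of_mem _ (Finset.mem_range.2 hiK), by linarith, ?_, by linarith⟩
  exact le_min ht.2 (by push_cast; linarith)

theorem tendstoUniformlyOn_Icc_of_monotoneOn {ι : Type*} {l : Filter ι} {F : ι → ℝ → ℝ}
    {f : ℝ → ℝ} {a b : ℝ} (hF : ∀ i, MonotoneOn (F i) (Icc a b)) (hf : ContinuousOn f (Icc a b))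
    (h : ∀ x ∈ Icc a b, Tendsto (F · x) l (𝓝 (f x))) :
    TendstoUniformlyOn F f l (Icc a b) := by
  rw [Metric.tendstoUniformlyOn_iff]
  intro ε hε
  obtain ⟨δ, hδ, hfδ⟩ := Metric.uniformContinuousOn_iff.mp
    (isCompact_Icc.uniformContinuousOn_of_continuous hf) (ε / 2) (half_pos hε)
  obtain ⟨S, hSsub, hS⟩ := exists_finset_bracket_Icc a b (half_pos hδ)
  have hgrid : ∀ᶠ i in l, ∀ s ∈ S, dist (F i s) (f s) < ε / 2 :=
    (eventually_all_finset S).2 fun s hs =>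
      Metric.tendsto_nhds.mp (h s (hSsub hs)) _ (half_pos hε)
  filter_upwards [hgrid] with i hi t ht
  obtain ⟨s, hs, s', hs', hst, hts', hss'⟩ := hS t ht
  have hFs := hi s hs
  have hFs' := hi s' hs'
  have hfs := hfδ t ht s (hSsub hs) (by rw [Real.dist_eq, abs_lt]; constructor <;> linarith)
  have hfs' := hfδ t ht s' (hSsub hs') (by rw [Real.dist_eq, abs_lt]; constructor <;> linarith)
  have hmono := hF i (hSsub hs) ht hst
  have hmono' := hF i ht (hSsub hs') hts'
  rw [Real.dist_eq, abs_lt] at hFs hFs' hfs hfs' ⊢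
  constructor <;> linarith

lemma tendsto_measureReal_of_null_frontier {Ω ι : Type*} [MeasurableSpace Ω]
    [TopologicalSpace Ω] [OpensMeasurableSpace Ω] [HasOuterApproxClosed Ω] {l : Filter ι}
    {μs : ι → Measure Ω} {μ : Measure Ω} [∀ i, IsProbabilityMeasure (μs i)] [IsProbabilityMeasure μ]
    (h : ∀ φ : BoundedContinuousFunction Ω ℝ,
      Tendsto (fun i => ∫ x, φ x ∂μs i) l (𝓝 (∫ x, φ x ∂μ)))
    {E : Set Ω} (hE : μ (frontier E) = 0) :
    Tendsto (fun i => (μs i).real E) l (𝓝 (μ.real E)) := by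
  have hlim : Tendsto (β := ProbabilityMeasure Ω) (fun i => ⟨μs i, inferInstance⟩) l
      (𝓝 ⟨μ, inferInstance⟩) :=
    ProbabilityMeasure.tendsto_iff_forall_integral_tendsto.mpr h
  exact (ENNReal.tendsto_toReal (measure_ne_top μ E)).comp
    (ProbabilityMeasure.tendsto_measure_of_null_frontier_of_tendsto' hlim hE)

lemma continuous_cdf (μ : Measure ℝ) [IsProbabilityMeasure μ] [NullSingletonClass μ] :
    Continuous (cdf μ) := by
  refine continuous_iff_continuousAt.2 fun x =>
    (cdf μ).mono.continuousAt_iff_leftLim_eq_rightLim.2 ?_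
  have hjump := (cdf μ).measure_singleton x
  rw [measure_cdf, measure_singleton, eq_comm, ENNReal.ofReal_eq_zero] at hjump
  rw [(cdf μ).rightLim_eq]
  linarith [(cdf μ).mono.leftLim_le (le_refl x)]

lemma measureReal_Icc_eq_sub (ν : Measure ℝ) [IsFiniteMeasure ν] {s t : ℝ} (h : s ≤ t) :
    ν.real (Icc s t) = ν.real (Iic t) - ν.real (Iio s) := by
  have hdisj : Disjoint (Iio s) (Icc s t) :=
    (Iio_disjoint_Ici le_rfl).mono_right Icc_subset_Ici_self
  rw [← Iio_union_Icc_eq_Iic h, measureReal_union hdisj measurableSet_Icc]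
  ring

section WeakConvergence

variable {ι : Type*} {l : Filter ι} {μs : ι → Measure ℝ} {μ : Measure ℝ}
  [∀ i, IsProbabilityMeasure (μs i)] [IsProbabilityMeasure μ] [NullSingletonClass μ]

theorem tendstoUniformlyOn_cdf
    (h : ∀ φ : BoundedContinuousFunction ℝ ℝ,
      Tendsto (fun i => ∫ x, φ x ∂μs i) l (𝓝 (∫ x, φ x ∂μ))) (a b : ℝ) :
    TendstoUniformlyOn (fun i => cdf (μs i)) (cdf μ) l (Icc a b) :=
  tendstoUniformlyOn_Icc_of_monotoneOn (fun i => (cdf (μs i)).mono.monotoneOn _)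
    (continuous_cdf μ).continuousOn fun x _ => by
      simpa only [cdf_eq_real] using
        tendsto_measureReal_of_null_frontier h (E := Iic x) (by simp)

theorem tendstoUniformlyOn_measureReal_Iio
    (h : ∀ φ : BoundedContinuousFunction ℝ ℝ,
      Tendsto (fun i => ∫ x, φ x ∂μs i) l (𝓝 (∫ x, φ x ∂μ))) (a b : ℝ) :
    TendstoUniformlyOn (fun i x => (μs i).real (Iio x)) (cdf μ) l (Icc a b) :=
  tendstoUniformlyOn_Icc_of_monotoneOn
    (fun i => fun _ _ _ _ hxy => measureReal_mono (Iio_subset_Iio hxy))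
    (continuous_cdf μ).continuousOn fun x _ => by
      simpa only [cdf_eq_real, measureReal_congr Iio_ae_eq_Iic] using
        tendsto_measureReal_of_null_frontier h (E := Iio x) (by simp)

end WeakConvergence

theorem uniform_convergence_of_interval_measures_double_index_general
    (μseq : ℕ → Measure ℝ) (μ : Measure ℝ)
    [∀ n, IsProbabilityMeasure (μseq n)] [IsProbabilityMeasure μ]
    (hac : μ ≪ volume)
    (hweak : ∀ φ : BoundedContinuousFunction ℝ ℝ,
      Tendsto (fun n => ∫ x, φ x ∂(μseq n)) atTop (nhds (∫ x, φ x ∂μ)))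
    (aseq : ℕ → ℝ) (a : ℝ) (haseq : ∀ m, aseq m ∈ Icc (0 : ℝ) 1)
    (ha : Tendsto aseq atTop (nhds a))
    (g : ℕ → ℕ → ℝ → ℝ → ℝ) (g₀ : ℝ → ℝ → ℝ)
    (hgmaps : ∀ m n, ∀ u ∈ Icc (0 : ℝ) 1, ∀ v ∈ Icc (0 : ℝ) 1,
      g m n u v ∈ Icc (0 : ℝ) 1)
    (hgbound : ∀ m n, ∀ u ∈ Icc (0 : ℝ) 1, ∀ v ∈ Icc (0 : ℝ) 1,
      aseq m ≤ g m n u v)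
    (hg₀maps : ∀ u ∈ Icc (0 : ℝ) 1, ∀ v ∈ Icc (0 : ℝ) 1, g₀ u v ∈ Icc (0 : ℝ) 1)
    (hgconv : ∀ ε > 0, ∃ N : ℕ, ∀ m ≥ N, ∀ n ≥ N,
      ∀ u ∈ Icc (0 : ℝ) 1, ∀ v ∈ Icc (0 : ℝ) 1, |g m n u v - g₀ u v| < ε) :
    ∀ ε > 0, ∃ N : ℕ, ∀ m ≥ N, ∀ n ≥ N,
      ∀ u ∈ Icc (0 : ℝ) 1, ∀ v ∈ Icc (0 : ℝ) 1,
        |((μseq n) (Icc (aseq m) (g m n u v))).toReal -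
          (μ (Icc a (g₀ u v))).toReal| < ε := by
  intro ε hε
  have hε4 : 0 < ε / 4 := by positivity
  have : NullSingletonClass μ := ⟨fun _ => hac Real.volume_singleton⟩
  have ha₀ : a ∈ Icc (0 : ℝ) 1 := isClosed_Icc.mem_of_tendsto ha (.of_forall haseq)
  have hag₀ : ∀ u ∈ Icc (0 : ℝ) 1, ∀ v ∈ Icc (0 : ℝ) 1, a ≤ g₀ u v := fun u hu v hv =>
    have hdiag : Tendsto (fun m => g m m u v) atTop (𝓝 (g₀ u v)) :=
      Metric.tendsto_atTop.2 fun η hη =>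
        let ⟨N, hN⟩ := hgconv η hη
        ⟨N, fun m hm => hN m hm m hm u hu v hv⟩
    le_of_tendsto_of_tendsto' ha hdiag fun m => hgbound m m u hu v hv
  obtain ⟨δ, hδ, hcdfδ⟩ := Metric.uniformContinuousOn_iff.mp
    (isCompact_Icc.uniformContinuousOn_of_continuous (continuous_cdf μ).continuousOn) _ hε4
  obtain ⟨Nμ, hNμ⟩ := eventually_atTop.mp <|
    (Metric.tendstoUniformlyOn_iff.mp (tendstoUniformlyOn_cdf hweak 0 1) _ hε4).and
      (Metric.tendstoUniformlyOn_iff.mp (tendstoUniformlyOn_measureReal_Iio hweak 0 1) _ hε4)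
  obtain ⟨Na, hNa⟩ := Metric.tendsto_atTop.mp ha δ hδ
  obtain ⟨Ng, hNg⟩ := hgconv δ hδ
  refine ⟨max Nμ (max Na Ng), fun m hm n hn u hu v hv => ?_⟩
  simp only [ge_iff_le, max_le_iff] at hm hn
  have hg := hgmaps m n u hu v hv
  have hIic := (hNμ n hn.1).1 _ hg
  have hIio := (hNμ n hn.1).2 _ (haseq m)
  have hcdf_g := hcdfδ _ hg _ (hg₀maps u hu v hv) <| by
    simpa only [Real.dist_eq] using hNg m hm.2.2 n hn.2.2 u hu v hv
  have hcdf_a := hcdfδ _ (haseq m) _ ha₀ (hNa m hm.2.1)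
  rw [← measureReal_def, ← measureReal_def, measureReal_Icc_eq_sub _ (hgbound m n u hu v hv),
    measureReal_Icc_eq_sub _ (hag₀ u hu v hv), measureReal_congr (μ := μ) Iio_ae_eq_Iic,
    ← cdf_eq_real, ← cdf_eq_real, ← cdf_eq_real]
  rw [Real.dist_eq, abs_lt] at hIic hIio hcdf_g hcdf_a
  rw [abs_lt]
  constructor <;> linarith

theorem uniform_convergence_of_interval_measures_double_index
    (μseq : ℕ → Measure ℝ) (μ : Measure ℝ)
    [∀ n, IsProbabilityMeasure (μseq n)] [IsProbabilityMeasure μ]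
    (hsupp : ∀ n, μseq n (Icc (0 : ℝ) 1) = 1) (hsuppμ : μ (Icc (0 : ℝ) 1) = 1)
    (hac : μ ≪ volume)
    (hweak : ∀ φ : BoundedContinuousFunction ℝ ℝ,
      Tendsto (fun n => ∫ x, φ x ∂(μseq n)) atTop (nhds (∫ x, φ x ∂μ)))
    (aseq : ℕ → ℝ) (a : ℝ) (haseq : ∀ m, aseq m ∈ Icc (0 : ℝ) 1)
    (ha : Tendsto aseq atTop (nhds a))
    (g : ℕ → ℕ → ℝ → ℝ → ℝ) (g₀ : ℝ → ℝ → ℝ)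
    (hgmaps : ∀ m n, ∀ u ∈ Icc (0 : ℝ) 1, ∀ v ∈ Icc (0 : ℝ) 1,
      g m n u v ∈ Icc (0 : ℝ) 1)
    (hgbound : ∀ m n, ∀ u ∈ Icc (0 : ℝ) 1, ∀ v ∈ Icc (0 : ℝ) 1,
      aseq m ≤ g m n u v)
    (hg₀c : ContinuousOn (fun p : ℝ × ℝ => g₀ p.1 p.2) (Icc (0 : ℝ) 1 ×ˢ Icc (0 : ℝ) 1))
    (hg₀maps : ∀ u ∈ Icc (0 : ℝ) 1, ∀ v ∈ Icc (0 : ℝ) 1, g₀ u v ∈ Icc (0 : ℝ) 1)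
    (hgconv : ∀ ε > 0, ∃ N : ℕ, ∀ m ≥ N, ∀ n ≥ N,
      ∀ u ∈ Icc (0 : ℝ) 1, ∀ v ∈ Icc (0 : ℝ) 1, |g m n u v - g₀ u v| < ε) :
    ∀ ε > 0, ∃ N : ℕ, ∀ m ≥ N, ∀ n ≥ N,
      ∀ u ∈ Icc (0 : ℝ) 1, ∀ v ∈ Icc (0 : ℝ) 1,
        |((μseq n) (Icc (aseq m) (g m n u v))).toReal -
          (μ (Icc a (g₀ u v))).toReal| < ε :=
  uniform_convergence_of_interval_measures_double_index_general μseq μ hac hweak aseq a haseq ha g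
    g₀ hgmaps hgbound hg₀maps hgconv
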